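/- Let L/K be a finite Galois extension with group Γ, and let G act on the K-algebra L = ∏ᵢ Lᵢ (a finite product of fields) through a surjection onto Γ permuting the factors transitively. Let e be a primitive idempotent with stabilizer G_e and F := eL. Then the functors e·(−) : Rep_L^⋊(G) → Rep_F^⋊(G_e) and (L⋊G) ⊗_{L⋊G_e} (−) : Rep_F^⋊(G_e) → Rep_L^⋊(G) are mutually inverse equivalences of categories. -/

import Mathlib

/-!
Since `G` permutes the primitive idempotents `eᵢ` of `L` transitively, every semilinear
`G`-module `M` splits as `M = ∑ᵢ eᵢ M` with `eᵢ M = g(e M)` for any `g` carrying `e` to `eᵢ`;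
so an equivariant map that is injective (surjective) on `e`-parts is injective (surjective),
which handles the counit. For the unit, `β` is injective because `W` embeds equivariantly into
the coinduced module `{f : G → W | f (h g) = h f(g)}` (made `u`-small through coset
representatives), and `e T ⊆ β W` because the `t` with `e g(t) ∈ β W` for all `g` form a
`G`-stable submodule containing `β W`, hence all of `T` by the uniqueness in the universal
property.
-/

universe u

variable {ι : Type*} [Fintype ι] [DecidableEq ι]
variable {Li : ι → Type*} [∀ i, Field (Li i)]
variable {G : Type*} [Group G]

/-- The multiplicative group structure on `AddAut A` that Mathlib had at the time
(multiplication is composition, `(g * h) x = g (h x)`); Mathlib now makes `AddAut A`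
an additive group instead. -/
instance AddAut.instGroupMulOld {A : Type*} [Add A] : Group (AddAut A) where
  mul g h := AddEquiv.trans h g
  one := AddEquiv.refl _
  inv := AddEquiv.symm
  mul_assoc _ _ _ := rfl
  one_mul _ := rfl
  mul_one _ := rfl
  inv_mul_cancel := AddEquiv.self_trans_symm

/-- The stabilizer `G_e ≤ G` of the primitive idempotent `e = (δ_{i i₀})_i` of the
product of fields `L = ∏ i, Li i`, for an action `σ : G → Aut(L)`. -/
def stab (σ : G →* ((Π i, Li i) ≃+* (Π i, Li i))) (i₀ : ι) : Subgroup G where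
  carrier := {g | σ g (Pi.single i₀ 1) = Pi.single i₀ 1}
  one_mem' := by
    show σ 1 (Pi.single i₀ 1) = Pi.single i₀ 1
    rw [map_one]; rfl
  mul_mem' := by
    intro a b ha hb
    simp only [Set.mem_setOf_eq] at *
    have : σ (a * b) (Pi.single i₀ 1) = σ a (σ b (Pi.single i₀ 1)) := by
      rw [map_mul]; rfl
    rw [this, hb, ha]
  inv_mem' := by
    intro a ha
    simp only [Set.mem_setOf_eq] at *
    have h2 : σ a⁻¹ * σ a = 1 := by rw [← map_mul, inv_mul_cancel, map_one]
    calc σ a⁻¹ (Pi.single i₀ 1) = σ a⁻¹ (σ a (Pi.single i₀ 1)) := by rw [ha]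
      _ = (σ a⁻¹ * σ a) (Pi.single i₀ 1) := rfl
      _ = Pi.single i₀ 1 := by rw [h2]; rfl

open Function

section Representations

variable {A : Type*} [AddCommGroup A]

theorem rep_mul_apply (ρ : G →* AddAut A) (g h : G) (x : A) : ρ (g * h) x = ρ g (ρ h x) := by
  rw [map_mul]; rfl

theorem rep_one_apply (ρ : G →* AddAut A) (x : A) : ρ 1 x = x := by
  rw [map_one]; rfl

theorem rep_apply_inv_apply (ρ : G →* AddAut A) (g : G) (x : A) : ρ g (ρ g⁻¹ x) = x := by
  rw [← rep_mul_apply, mul_inv_cancel, rep_one_apply]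

def addAutHomOfAction (a : G → A → A) (map_add : ∀ g x y, a g (x + y) = a g x + a g y)
    (one_apply : ∀ x, a 1 x = x) (mul_apply : ∀ g h x, a (g * h) x = a g (a h x)) :
    G →* AddAut A where
  toFun g :=
    { toFun := a g
      invFun := a g⁻¹
      left_inv x := by rw [← mul_apply, inv_mul_cancel, one_apply]
      right_inv x := by rw [← mul_apply, mul_inv_cancel, one_apply]
      map_add' := map_add g }
  map_one' := AddEquiv.ext one_apply
  map_mul' g h := AddEquiv.ext (mul_apply g h)

@[simp]
theorem addAutHomOfAction_apply (a : G → A → A) (map_add one_apply mul_apply) (g : G) (x : A) :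
    addAutHomOfAction a map_add one_apply mul_apply g x = a g x := rfl

def transferRep {B : Type*} [AddCommGroup B] (e : A ≃+ B) (ρ : G →* AddAut A) :
    G →* AddAut B :=
  addAutHomOfAction (fun g x => e (ρ g (e.symm x))) (fun g x y => by simp)
    (fun x => by rw [rep_one_apply, AddEquiv.apply_symm_apply])
    (fun g h x => by rw [rep_mul_apply, AddEquiv.symm_apply_apply])

variable {R : Type*} [Semiring R] (σ : G →* (R ≃+* R))

def IsSemilinear {M : Type*} [AddCommGroup M] [Module R M] (ρ : G →* AddAut M) : Prop :=
  ∀ (g : G) (c : R) (m : M), ρ g (c • m) = σ g c • ρ g m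

/-- The universal property of the induced representation `T = (R ⋊ G) ⊗_{R ⋊ H} W`. -/
def IsInducedRep (H : Subgroup G) {W T : Type u} [AddCommGroup W] [Module R W]
    [AddCommGroup T] [Module R T] (ρW : H →* AddAut W) (ρT : G →* AddAut T)
    (β : W →ₗ[R] T) : Prop :=
  ∀ (U : Type u) [AddCommGroup U] [Module R U] (ρU : G →* AddAut U), IsSemilinear σ ρU →
    ∀ f : W →ₗ[R] U, (∀ (h : H) (w : W), f (ρW h w) = ρU h (f w)) →
      ∃! F : T →ₗ[R] U, (∀ (g : G) (t : T), F (ρT g t) = ρU g (F t)) ∧ ∀ w, F (β w) = f w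

theorem isSemilinear_transferRep [Module R A] {B : Type*} [AddCommGroup B] [Module R B]
    (e : A ≃ₗ[R] B) {ρ : G →* AddAut A} (hρ : IsSemilinear σ ρ) :
    IsSemilinear σ (transferRep e.toAddEquiv ρ) := by
  intro g c x
  change e (ρ g (e.symm (c • x))) = σ g c • e (ρ g (e.symm x))
  rw [map_smul, hρ, map_smul]

end Representations

section Induced

variable {R : Type*} [Ring R] {σ : G →* (R ≃+* R)} {H : Subgroup G}
  {W T : Type u} [AddCommGroup W] [Module R W] [AddCommGroup T] [Module R T]
  {ρW : H →* AddAut W} {ρT : G →* AddAut T} {β : W →ₗ[R] T}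

def restrictRep (ρ : G →* AddAut T) (N : Submodule R T) (hN : ∀ g, ∀ t ∈ N, ρ g t ∈ N) :
    G →* AddAut N :=
  addAutHomOfAction (fun g (x : N) => ⟨ρ g (x : T), hN g x x.2⟩)
    (fun g x y => Subtype.ext (map_add (ρ g) (x : T) y))
    (fun x => Subtype.ext (rep_one_apply ρ (x : T)))
    (fun g h x => Subtype.ext (rep_mul_apply ρ g h (x : T)))

theorem IsInducedRep.eq_top_of_range_le (hind : IsInducedRep σ H ρW ρT β)
    (hρT : IsSemilinear σ ρT) (hβ : ∀ (h : H) (w : W), β (ρW h w) = ρT h (β w))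
    {N : Submodule R T} (hN : ∀ g, ∀ t ∈ N, ρT g t ∈ N) (hβN : LinearMap.range β ≤ N) :
    N = ⊤ := by
  have hβN' : ∀ w, β w ∈ N := fun w => hβN (LinearMap.mem_range_self β w)
  obtain ⟨F, hF, -⟩ := hind N (restrictRep ρT N hN)
    (fun g c x => Subtype.ext (hρT g c x)) (β.codRestrict N hβN')
    (fun h w => Subtype.ext (hβ h w))
  have hid : N.subtype ∘ₗ F = LinearMap.id :=
    (hind T ρT hρT β hβ).unique
      ⟨fun g t => congrArg Subtype.val (hF.1 g t), fun w => congrArg Subtype.val (hF.2 w)⟩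
      ⟨fun _ _ => rfl, fun _ => rfl⟩
  refine eq_top_iff.mpr fun t _ => ?_
  rw [← LinearMap.id_apply (R := R) t, ← hid]
  exact (F t).2

end Induced

section Coinduced

variable {R : Type*} [Ring R] (σ : G →* (R ≃+* R)) (H : Subgroup G) {W : Type*}

/-- Functions `G → W` with the `R`-module structure `(c • f) g = σ g c • f g`. -/
structure TwistedFun (σ : G →* (R ≃+* R)) (W : Type*) where
  ofFun ::
  toFun : G → W

namespace TwistedFun

def equivFun : TwistedFun σ W ≃ (G → W) := ⟨toFun, ofFun, fun _ => rfl, fun _ => rfl⟩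

attribute [coe] toFun

instance : CoeFun (TwistedFun σ W) fun _ => G → W := ⟨toFun⟩

variable {σ}

@[ext]
theorem ext {f f' : TwistedFun σ W} (h : ∀ g, f g = f' g) : f = f' := by
  cases f; cases f'; exact congrArg ofFun (funext h)

@[simp] theorem ofFun_apply (f : G → W) (g : G) : ofFun (σ := σ) f g = f g := rfl

variable [AddCommGroup W]

instance : AddCommGroup (TwistedFun σ W) := (equivFun σ).addCommGroup

instance [Module R W] : Module R (TwistedFun σ W) :=
  letI := Module.compHom (G → W) (RingHom.pi fun g => (σ g : R →+* R))
  (equivFun σ).module R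

variable (f f' : TwistedFun σ W) (g : G)

@[simp] theorem add_apply : (f + f') g = f g + f' g := rfl
@[simp] theorem smul_apply [Module R W] (c : R) : (c • f) g = σ g c • f g := rfl

end TwistedFun

variable [AddCommGroup W] [Module R W] (ρW : H →* AddAut W)

def coind (hρW : IsSemilinear (σ.comp H.subtype) ρW) : Submodule R (TwistedFun σ W) where
  carrier := {f | ∀ (h : H) (g : G), f (h * g) = ρW h (f g)}
  add_mem' {f f'} hf hf' h g := by
    rw [TwistedFun.add_apply, TwistedFun.add_apply, hf, hf', map_add]
  zero_mem' h g := (map_zero (ρW h)).symm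
  smul_mem' c f hf h g := by
    rw [TwistedFun.smul_apply, TwistedFun.smul_apply, hf, hρW, map_mul, RingAut.mul_apply]
    rfl

variable {σ H ρW} (hρW : IsSemilinear (σ.comp H.subtype) ρW)

def coindRep : G →* AddAut (coind σ H ρW hρW) :=
  addAutHomOfAction
    (fun x f => ⟨.ofFun fun g => f.1 (g * x), fun h g => by
      simp only [mul_assoc]
      exact f.2 h (g * x)⟩)
    (fun _ _ _ => rfl)
    (fun f => by ext; simp)
    (fun x y f => by ext; simp [mul_assoc])

theorem isSemilinear_coindRep : IsSemilinear σ (coindRep hρW) := by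
  intro x c f
  ext g
  change σ (g * x) c • (f : TwistedFun σ W) (g * x) = σ g (σ x c) • (f : TwistedFun σ W) (g * x)
  rw [map_mul, RingAut.mul_apply]

open scoped Classical in
noncomputable def coindIncl : W →ₗ[R] coind σ H ρW hρW where
  toFun w := ⟨.ofFun fun g => if hg : g ∈ H then ρW ⟨g, hg⟩ w else 0, fun h g => by
    by_cases hg : g ∈ H
    · rw [TwistedFun.ofFun_apply, TwistedFun.ofFun_apply, dif_pos hg,
        dif_pos (H.mul_mem h.2 hg), ← rep_mul_apply]
      rfl
    · rw [TwistedFun.ofFun_apply, TwistedFun.ofFun_apply, dif_neg hg,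
        dif_neg fun hhg => hg (by simpa using H.mul_mem (H.inv_mem h.2) hhg), map_zero]⟩
  map_add' w w' := by
    ext g
    simp only [Submodule.coe_add, TwistedFun.add_apply]
    split_ifs <;> simp
  map_smul' c w := by
    ext g
    simp only [SetLike.val_smul, TwistedFun.smul_apply]
    split_ifs with hg
    · exact hρW ⟨g, hg⟩ c w
    · simp

theorem coindIncl_injective : Injective (coindIncl hρW) := by
  intro w w' h
  have h1 := congrArg (fun f : coind σ H ρW hρW => (f : TwistedFun σ W) 1) h
  simpa [coindIncl, H.one_mem, rep_one_apply] using h1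

theorem coindIncl_rep_apply (h : H) (w : W) :
    coindIncl hρW (ρW h w) = coindRep hρW h (coindIncl hρW w) := by
  classical
  ext g
  change (if hg : g ∈ H then ρW ⟨g, hg⟩ (ρW h w) else 0)
    = if hgh : g * h ∈ H then ρW ⟨g * h, hgh⟩ w else 0
  by_cases hg : g ∈ H
  · rw [dif_pos hg, dif_pos (H.mul_mem hg h.2), ← rep_mul_apply]
    rfl
  · rw [dif_neg hg, dif_neg fun hgh => hg (by simpa using H.mul_mem hgh (H.inv_mem h.2))]

theorem small_coind {ι' : Type*} [Small.{u} ι'] [Small.{u} W] (r : ι' → G)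
    (hr : ∀ g, ∃ i, g * (r i)⁻¹ ∈ H) : Small.{u} (coind σ H ρW hρW) := by
  refine small_of_injective (f := fun f i => (f : TwistedFun σ W) (r i)) fun f f' hff' => ?_
  ext g
  obtain ⟨i, hi⟩ := hr g
  have hg : (⟨_, hi⟩ : H) * r i = g := inv_mul_cancel_right g (r i)
  rw [← hg, f.2, f'.2]
  exact congrArg (ρW _) (congrFun hff' i)

end Coinduced

theorem IsInducedRep.injective {R : Type*} [Ring R] {σ : G →* (R ≃+* R)} {H : Subgroup G}
    {W T : Type u} [AddCommGroup W] [Module R W] [AddCommGroup T] [Module R T]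
    {ρW : H →* AddAut W} {ρT : G →* AddAut T} {β : W →ₗ[R] T}
    (hind : IsInducedRep σ H ρW ρT β) (hρW : IsSemilinear (σ.comp H.subtype) ρW)
    {ι' : Type*} [Small.{u} ι'] (r : ι' → G) (hr : ∀ g, ∃ i, g * (r i)⁻¹ ∈ H) :
    Injective β := by
  have := small_coind hρW r hr
  let e := (Shrink.linearEquiv R (coind σ H ρW hρW)).symm
  obtain ⟨F, hF, -⟩ := hind _ (transferRep e.toAddEquiv (coindRep hρW))
    (isSemilinear_transferRep σ e (isSemilinear_coindRep hρW)) (e.toLinearMap ∘ₗ coindIncl hρW)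
    fun h w => by simp [transferRep, coindIncl_rep_apply]
  intro w w' hww'
  apply coindIncl_injective hρW
  apply e.injective
  simpa [hF.2] using congrArg F hww'

section PiSingle

omit [Fintype ι] in
theorem isIdempotentElem_single_one (i : ι) : IsIdempotentElem (Pi.single i 1 : Π k, Li k) := by
  rw [IsIdempotentElem, ← Pi.single_mul, one_mul]

omit [Fintype ι] in
theorem single_one_ne_zero (i : ι) : (Pi.single i 1 : Π k, Li k) ≠ 0 :=
  Pi.single_eq_zero_iff.not.mpr one_ne_zero

omit [Fintype ι] in
theorem single_one_mul (i : ι) (x : Π k, Li k) : Pi.single i 1 * x = Pi.single i (x i) := by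
  rw [← Pi.single_mul_left, one_mul]

omit [Fintype ι] in
theorem single_one_mul_single_one_of_ne {i j : ι} (h : i ≠ j) :
    (Pi.single i 1 : Π k, Li k) * Pi.single j 1 = 0 := by
  rw [single_one_mul, Pi.single_eq_of_ne h, Pi.single_zero]

omit [Fintype ι] in
theorem eq_zero_or_eq_single_one_of_mul_single_one {i : ι} {w : Π k, Li k}
    (hw : IsIdempotentElem w) (hwi : w * Pi.single i 1 = w) : w = 0 ∨ w = Pi.single i 1 := by
  have hw' : w = Pi.single i (w i) := by rw [← single_one_mul, mul_comm, hwi]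
  rcases IsIdempotentElem.iff_eq_zero_or_one.mp (congrFun hw i : w i * w i = w i) with h | h
  · left
    rw [hw', h, Pi.single_zero]
  · right
    rw [hw', h]

omit [Fintype ι] in
theorem RingEquiv.exists_apply_single_one (φ : (Π k, Li k) ≃+* (Π k, Li k)) (i : ι) :
    ∃ j, φ (Pi.single i 1) = Pi.single j 1 := by
  obtain ⟨j, hj⟩ : ∃ j, φ (Pi.single i 1) j ≠ 0 :=
    Function.ne_iff.mp (EmbeddingLike.map_ne_zero_iff.mpr (single_one_ne_zero i))
  have hu : IsIdempotentElem (φ (Pi.single i 1)) := (isIdempotentElem_single_one i).map φ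
  have huj : φ (Pi.single i 1) j = 1 :=
    (IsIdempotentElem.iff_eq_zero_or_one.mp (congrFun hu j : _ * _ = _)).resolve_left hj
  have hsymm : φ.symm (Pi.single j 1) = Pi.single i 1 := by
    refine (eq_zero_or_eq_single_one_of_mul_single_one
      ((isIdempotentElem_single_one j).map φ.symm) ?_).resolve_left ?_
    · apply φ.injective
      rw [map_mul, φ.apply_symm_apply, single_one_mul, huj]
    · exact EmbeddingLike.map_ne_zero_iff.mpr (single_one_ne_zero j)
  exact ⟨j, by rw [← hsymm, φ.apply_symm_apply]⟩

end PiSingle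

section Stabilizer

variable {σ : G →* ((Π i, Li i) ≃+* (Π i, Li i))} {i₀ : ι}

omit [Fintype ι] in
theorem single_one_mul_apply_single_one_of_notMem_stab {g : G} (hg : g ∉ stab σ i₀) :
    Pi.single i₀ 1 * σ g (Pi.single i₀ 1) = 0 := by
  obtain ⟨j, hj⟩ := (σ g).exists_apply_single_one i₀
  rw [hj]
  exact single_one_mul_single_one_of_ne fun h => hg (hj.trans (by rw [h]))

omit [Fintype ι] in
theorem exists_mul_inv_mem_stab
    (htrans : ∀ i, ∃ g : G, σ g (Pi.single i (1 : Li i)) = Pi.single i₀ 1) :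
    ∃ r : ι → G, ∀ g, ∃ i, g * (r i)⁻¹ ∈ stab σ i₀ := by
  choose r hr using htrans
  refine ⟨r, fun g => ?_⟩
  obtain ⟨j, hj⟩ := (σ g⁻¹).exists_apply_single_one i₀
  have h1 : σ (r j)⁻¹ (Pi.single i₀ 1) = Pi.single j 1 := by
    rw [map_inv, RingAut.inv_apply, RingEquiv.symm_apply_eq, hr]
  have h2 : σ g (Pi.single j 1) = Pi.single i₀ 1 := by
    rw [← hj, ← RingAut.mul_apply, ← map_mul, mul_inv_cancel, map_one]
    rfl
  refine ⟨j, ?_⟩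
  change σ (g * (r j)⁻¹) (Pi.single i₀ 1) = Pi.single i₀ 1
  rw [map_mul, RingAut.mul_apply, h1, h2]

omit [Fintype ι] in
theorem IsInducedRep.single_smul_mem_range {W T : Type u} [AddCommGroup W]
    [Module (Π i, Li i) W] [AddCommGroup T] [Module (Π i, Li i) T] {ρW : stab σ i₀ →* AddAut W}
    {ρT : G →* AddAut T} {β : W →ₗ[Π i, Li i] T} (hind : IsInducedRep σ (stab σ i₀) ρW ρT β)
    (hρT : IsSemilinear σ ρT) (hβ : ∀ (h : stab σ i₀) (w : W), β (ρW h w) = ρT h (β w))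
    (hW : ∀ w : W, (Pi.single i₀ 1 : Π i, Li i) • w = w) (t : T) :
    (Pi.single i₀ 1 : Π i, Li i) • t ∈ LinearMap.range β := by
  let N : Submodule (Π i, Li i) T :=
    { carrier := {t | ∀ g, (Pi.single i₀ 1 : Π i, Li i) • ρT g t ∈ LinearMap.range β}
      add_mem' := fun ha hb g => by rw [map_add, smul_add]; exact add_mem (ha g) (hb g)
      zero_mem' := fun g => by rw [map_zero, smul_zero]; exact zero_mem _
      smul_mem' := fun c t ht g => by rw [hρT, smul_comm]; exact Submodule.smul_mem _ _ (ht g) }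
  have hN : ∀ g, ∀ t ∈ N, ρT g t ∈ N := fun g t ht g' => by
    simpa only [rep_mul_apply] using ht (g' * g)
  have hβN : LinearMap.range β ≤ N := by
    rintro _ ⟨w, rfl⟩ g
    have hβw : (Pi.single i₀ 1 : Π i, Li i) • β w = β w := by rw [← map_smul, hW]
    by_cases hg : g ∈ stab σ i₀
    · refine ⟨ρW ⟨g, hg⟩ w, ?_⟩
      rw [hβ]
      conv_lhs => rw [← hβw, hρT, show σ g (Pi.single i₀ 1) = Pi.single i₀ 1 from hg]
    · rw [← hβw, hρT, smul_smul, single_one_mul_apply_single_one_of_notMem_stab hg, zero_smul]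
      exact zero_mem _
  have hmem : t ∈ N := (hind.eq_top_of_range_le hρT hβ hN hβN) ▸ Submodule.mem_top
  simpa only [rep_one_apply] using hmem 1

end Stabilizer

section Decomposition

variable {σ : G →* ((Π i, Li i) ≃+* (Π i, Li i))} {i₀ : ι}
  {M : Type*} [AddCommGroup M] [Module (Π i, Li i) M]

omit [Fintype ι] in
theorem single_smul_eq_of_apply_single {ρ : G →* AddAut M} (hρ : IsSemilinear σ ρ) {i : ι}
    {g : G} (hg : σ g (Pi.single i₀ 1) = Pi.single i 1) (m : M) :
    (Pi.single i 1 : Π k, Li k) • m = ρ g ((Pi.single i₀ 1 : Π k, Li k) • ρ g⁻¹ m) := by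
  rw [hρ, hg, rep_apply_inv_apply]

theorem sum_single_smul (m : M) : ∑ i, (Pi.single i 1 : Π k, Li k) • m = m := by
  have hone : ∑ i, (Pi.single i 1 : Π k, Li k) = 1 := Finset.univ_sum_single 1
  rw [← Finset.sum_smul, hone, one_smul]

variable (htrans : ∀ i, ∃ g : G, σ g (Pi.single i₀ (1 : Li i₀)) = Pi.single i 1)
  {N : Type*} [AddCommGroup N] [Module (Π i, Li i) N]
  {ρM : G →* AddAut M} {ρN : G →* AddAut N}
  (F : M →ₗ[Π i, Li i] N) (hF : ∀ g m, F (ρM g m) = ρN g (F m))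
include htrans hF

theorem injective_of_single_smul (hρM : IsSemilinear σ ρM)
    (hinj : ∀ m, F ((Pi.single i₀ 1 : Π i, Li i) • m) = 0 → (Pi.single i₀ 1 : Π i, Li i) • m = 0) :
    Injective F := by
  refine (injective_iff_map_eq_zero F).mpr fun m hm => ?_
  rw [← sum_single_smul (Li := Li) m]
  refine Finset.sum_eq_zero fun i _ => ?_
  obtain ⟨g, hg⟩ := htrans i
  rw [single_smul_eq_of_apply_single hρM hg, hinj, map_zero]
  rw [map_smul, hF, hm, map_zero, smul_zero]

theorem surjective_of_single_smul (hρN : IsSemilinear σ ρN)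
    (hsurj : ∀ n, ∃ m, F m = (Pi.single i₀ 1 : Π i, Li i) • n) : Surjective F := by
  intro n
  have hcomp : ∀ i, ∃ m, F m = (Pi.single i 1 : Π k, Li k) • n := fun i => by
    obtain ⟨g, hg⟩ := htrans i
    obtain ⟨m, hm⟩ := hsurj (ρN g⁻¹ n)
    exact ⟨ρM g m, by rw [hF, hm, single_smul_eq_of_apply_single hρN hg]⟩
  choose m hm using hcomp
  exact ⟨∑ i, m i, by rw [map_sum, Finset.sum_congr rfl fun i _ => hm i, sum_single_smul]⟩

end Decomposition

theorem stmt7_general (σ : G →* ((Π i, Li i) ≃+* (Π i, Li i))) (i₀ : ι)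
    (htrans : ∀ i j : ι, ∃ g : G,
      σ g (Pi.single i (1 : Li i)) = Pi.single j (1 : Li j))
    -- `V`: a finite-rank free semilinear representation of `G` over `L`
    (V : Type u) [AddCommGroup V] [Module (Π i, Li i) V]
    (ρ : G →* AddAut V)
    (hρ : ∀ (g : G) (c : Π i, Li i) (v : V), ρ g (c • v) = σ g c • ρ g v)
    -- `W`: a semilinear representation of `G_e` over `F = eL`
    (W : Type u) [AddCommGroup W] [Module (Π i, Li i) W]
    (hW : ∀ w : W, (Pi.single i₀ (1 : Li i₀) : Π i, Li i) • w = w)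
    (ρW : (stab σ i₀) →* AddAut W)
    (hρW : ∀ (g : stab σ i₀) (c : Π i, Li i) (w : W),
      ρW g (c • w) = σ (g : G) c • ρW g w)
    -- `(T, ρT, β)`: the induced module `(L⋊G) ⊗_{L⋊G_e} W`, via its universal property
    (T : Type u) [AddCommGroup T] [Module (Π i, Li i) T]
    (ρT : G →* AddAut T)
    (hρT : ∀ (g : G) (c : Π i, Li i) (t : T), ρT g (c • t) = σ g c • ρT g t)
    (β : W →ₗ[Π i, Li i] T)
    (hβ : ∀ (g : stab σ i₀) (w : W), β (ρW g w) = ρT (g : G) (β w))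
    (huniv : ∀ (U : Type u) [AddCommGroup U] [Module (Π i, Li i) U]
      (ρU : G →* AddAut U),
      (∀ (g : G) (c : Π i, Li i) (x : U), ρU g (c • x) = σ g c • ρU g x) →
      ∀ f : W →ₗ[Π i, Li i] U,
        (∀ (g : stab σ i₀) (w : W), f (ρW g w) = ρU (g : G) (f w)) →
        ∃! F : T →ₗ[Π i, Li i] U,
          (∀ (g : G) (t : T), F (ρT g t) = ρU g (F t)) ∧ ∀ w : W, F (β w) = f w) :
    -- the unit `ψ : W → e·T` is an isomorphism onto `e·T`
    (Function.Injective (fun w : W => (Pi.single i₀ (1 : Li i₀) : Π i, Li i) • β w) ∧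
      Set.range (fun w : W => (Pi.single i₀ (1 : Li i₀) : Π i, Li i) • β w)
        = {x : T | ∃ t : T, x = (Pi.single i₀ (1 : Li i₀) : Π i, Li i) • t}) ∧
    -- the counit `φ : T → V` is an isomorphism whenever `W ≅ e·V`
    (∀ j : W →ₗ[Π i, Li i] V, Function.Injective j →
      Set.range j = {x : V | ∃ v : V, x = (Pi.single i₀ (1 : Li i₀) : Π i, Li i) • v} →
      (∀ (g : stab σ i₀) (w : W), j (ρW g w) = ρ (g : G) (j w)) →
      ∀ F : T →ₗ[Π i, Li i] V,
        (∀ (g : G) (t : T), F (ρT g t) = ρ g (F t)) →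
        (∀ w : W, F (β w) = j w) →
        Function.Bijective F) := by
  have hβe : ∀ w : W, (Pi.single i₀ 1 : Π i, Li i) • β w = β w := fun w => by
    rw [← map_smul, hW]
  obtain ⟨r, hr⟩ := exists_mul_inv_mem_stab (σ := σ) fun i => htrans i i₀
  have hβinj : Injective β := IsInducedRep.injective huniv hρW r hr
  have hrange := IsInducedRep.single_smul_mem_range huniv hρT hβ hW
  refine ⟨⟨fun w w' h => hβinj (by simpa only [hβe] using h), ?_⟩, ?_⟩
  · ext x
    constructor
    · rintro ⟨w, rfl⟩
      exact ⟨β w, rfl⟩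
    · rintro ⟨t, rfl⟩
      obtain ⟨w, hw⟩ := hrange t
      exact ⟨w, (hβe w).trans hw⟩
  · intro j hj hjrange _ F hF hFβ
    refine ⟨injective_of_single_smul (htrans i₀) F hF hρT fun t ht => ?_,
      surjective_of_single_smul (htrans i₀) F hF hρ fun v => ?_⟩
    · obtain ⟨w, hw⟩ := hrange t
      rw [← hw, hFβ, ← map_zero j] at ht
      rw [← hw, hj ht, map_zero]
    · obtain ⟨w, hw⟩ : (Pi.single i₀ 1 : Π i, Li i) • v ∈ Set.range j := hjrange ▸ ⟨v, rfl⟩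
      exact ⟨β w, by rw [hFβ, hw]⟩

/-- Let `L = ∏ᵢ Lᵢ` be a finite product of fields, `Γ`-Galois over `K`,
with a group `G` acting on `L` through a surjection onto `Γ` permuting the factors
transitively; let `e` be a primitive idempotent with stabilizer `G_e` and `F = eL`.
Then the functors `e·(−) : Rep_L^⋊(G) → Rep_F^⋊(G_e)` and
`(L⋊G) ⊗_{L⋊G_e} (−) : Rep_F^⋊(G_e) → Rep_L^⋊(G)` are mutually inverse equivalences:
for every `W ∈ Rep_F^⋊(G_e)` with induced module `(T, β)` (characterized by the
universal property of `(L⋊G) ⊗_{L⋊G_e} W`), the unit `ψ : W → e·T`, `w ↦ e • β w`, is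
an isomorphism, and whenever `j : W ≅ e·V` for `V ∈ Rep_L^⋊(G)`, the counit
`φ : T → V` (the unique equivariant map with `φ ∘ β = j`, given by `λg ⊗ w ↦ λ·g(w)`)
is an isomorphism. -/
theorem stmt7 (σ : G →* ((Π i, Li i) ≃+* (Π i, Li i))) (i₀ : ι)
    (htrans : ∀ i j : ι, ∃ g : G,
      σ g (Pi.single i (1 : Li i)) = Pi.single j (1 : Li j))
    -- `V`: a finite-rank free semilinear representation of `G` over `L`
    (V : Type u) [AddCommGroup V] [Module (Π i, Li i) V]
    [Module.Finite (Π i, Li i) V] [Module.Free (Π i, Li i) V]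
    (ρ : G →* AddAut V)
    (hρ : ∀ (g : G) (c : Π i, Li i) (v : V), ρ g (c • v) = σ g c • ρ g v)
    -- `W`: a semilinear representation of `G_e` over `F = eL`
    (W : Type u) [AddCommGroup W] [Module (Π i, Li i) W] [Module.Finite (Π i, Li i) W]
    (hW : ∀ w : W, (Pi.single i₀ (1 : Li i₀) : Π i, Li i) • w = w)
    (ρW : (stab σ i₀) →* AddAut W)
    (hρW : ∀ (g : stab σ i₀) (c : Π i, Li i) (w : W),
      ρW g (c • w) = σ (g : G) c • ρW g w)
    -- `(T, ρT, β)`: the induced module `(L⋊G) ⊗_{L⋊G_e} W`, via its universal property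
    (T : Type u) [AddCommGroup T] [Module (Π i, Li i) T]
    (ρT : G →* AddAut T)
    (hρT : ∀ (g : G) (c : Π i, Li i) (t : T), ρT g (c • t) = σ g c • ρT g t)
    (β : W →ₗ[Π i, Li i] T)
    (hβ : ∀ (g : stab σ i₀) (w : W), β (ρW g w) = ρT (g : G) (β w))
    (huniv : ∀ (U : Type u) [AddCommGroup U] [Module (Π i, Li i) U]
      (ρU : G →* AddAut U),
      (∀ (g : G) (c : Π i, Li i) (x : U), ρU g (c • x) = σ g c • ρU g x) →
      ∀ f : W →ₗ[Π i, Li i] U,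
        (∀ (g : stab σ i₀) (w : W), f (ρW g w) = ρU (g : G) (f w)) →
        ∃! F : T →ₗ[Π i, Li i] U,
          (∀ (g : G) (t : T), F (ρT g t) = ρU g (F t)) ∧ ∀ w : W, F (β w) = f w) :
    -- the unit `ψ : W → e·T` is an isomorphism onto `e·T`
    (Function.Injective (fun w : W => (Pi.single i₀ (1 : Li i₀) : Π i, Li i) • β w) ∧
      Set.range (fun w : W => (Pi.single i₀ (1 : Li i₀) : Π i, Li i) • β w)
        = {x : T | ∃ t : T, x = (Pi.single i₀ (1 : Li i₀) : Π i, Li i) • t}) ∧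
    -- the counit `φ : T → V` is an isomorphism whenever `W ≅ e·V`
    (∀ j : W →ₗ[Π i, Li i] V, Function.Injective j →
      Set.range j = {x : V | ∃ v : V, x = (Pi.single i₀ (1 : Li i₀) : Π i, Li i) • v} →
      (∀ (g : stab σ i₀) (w : W), j (ρW g w) = ρ (g : G) (j w)) →
      ∀ F : T →ₗ[Π i, Li i] V,
        (∀ (g : G) (t : T), F (ρT g t) = ρ g (F t)) →
        (∀ w : W, F (β w) = j w) →
        Function.Bijective F) :=
  stmt7_general σ i₀ htrans V ρ hρ W hW ρW hρW T ρT hρT β hβ huniv
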